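/- Let μ be a Borel probability measure on the unit sphere S² of ℝ³ whose barycenter vanishes, i.e. the vector-valued integral ∫_{S²} r dμ(r) equals 0. Then g*(μ) = 2 · sup over Borel subsets R of S² of ‖∫_R r dμ(r)‖ = 2 · sup over unit vectors v ∈ S² of ‖∫_{{r ∈ S² : ⟨r,v⟩ ≥ 0}} r dμ(r)‖. -/

import Mathlib

/-!
Write `f = ⟪·, v⟫`. Since the barycenter vanishes, `f` has mean zero, so for every
measurable `R` the integrals of `f` over `R` and over `Rᶜ` are opposite; hence
`2 ∫_R f ≤ ∫ |f|`, with equality for the half-space `R = {f ≥ 0}`. As `∫_R f = ⟪∫_R r, v⟫`,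
taking `v` in the direction of `∫_R r` gives `2 ‖∫_R r‖ ≤ g*(μ)`, while the half-spaces give
`g*(μ) ≤ 2 sup_v ‖∫_{f ≥ 0} r‖`.
-/

open MeasureTheory Real
open scoped ENNReal

noncomputable section

abbrev E3 := EuclideanSpace ℝ (Fin 3)

/-- The unit sphere S² in ℝ³. -/
def unitSphere : Set E3 := Metric.sphere (0 : E3) 1

/-- `g C μ` is the supremum over unit vectors `v` of `∫ √(C² + (1−C²)⟨r,v⟩²) dμ(r)`. -/
def g (C : ℝ) (μ : Measure E3) : ℝ :=
  ⨆ v : unitSphere, ∫ r, Real.sqrt (C ^ 2 + (1 - C ^ 2) * (inner ℝ r (v : E3) : ℝ) ^ 2) ∂μ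


/-- `gstar μ` is the supremum over unit vectors `v` of `∫ |⟨r,v⟩| dμ(r)`. -/
def gstar (μ : Measure E3) : ℝ :=
  ⨆ v : unitSphere, ∫ r, |(inner ℝ r (v : E3) : ℝ)| ∂μ

open Set Metric
open scoped RealInnerProductSpace

section MeanZero

variable {α : Type*} [MeasurableSpace α] {μ : Measure α} {f : α → ℝ} {s : Set α}

theorem setIntegral_compl_eq_neg_of_integral_eq_zero (hf : Integrable f μ)
    (h0 : ∫ x, f x ∂μ = 0) (hs : NullMeasurableSet s μ) :
    ∫ x in sᶜ, f x ∂μ = -∫ x in s, f x ∂μ := by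
  rw [eq_neg_iff_add_eq_zero, add_comm, integral_add_compl₀ hs hf, h0]

theorem two_mul_setIntegral_le_integral_abs (hf : Integrable f μ) (h0 : ∫ x, f x ∂μ = 0)
    (hs : NullMeasurableSet s μ) : 2 * ∫ x in s, f x ∂μ ≤ ∫ x, |f x| ∂μ := by
  have hin : ∫ x in s, f x ∂μ ≤ ∫ x in s, |f x| ∂μ :=
    integral_mono hf.integrableOn hf.abs.integrableOn fun x => le_abs_self (f x)
  have hout : ∫ x in sᶜ, -f x ∂μ ≤ ∫ x in sᶜ, |f x| ∂μ :=
    integral_mono hf.neg.integrableOn hf.abs.integrableOn fun x => neg_le_abs (f x)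
  rw [integral_neg, setIntegral_compl_eq_neg_of_integral_eq_zero hf h0 hs, neg_neg] at hout
  rw [← integral_add_compl₀ hs hf.abs]
  linarith

theorem integral_abs_eq_two_mul_setIntegral_nonneg (hf : Integrable f μ)
    (h0 : ∫ x, f x ∂μ = 0) : ∫ x, |f x| ∂μ = 2 * ∫ x in {x | 0 ≤ f x}, f x ∂μ := by
  have hs : NullMeasurableSet {x | 0 ≤ f x} μ :=
    nullMeasurableSet_le aemeasurable_const hf.aemeasurable
  have hpos : ∫ x in {x | 0 ≤ f x}, |f x| ∂μ = ∫ x in {x | 0 ≤ f x}, f x ∂μ :=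
    setIntegral_congr_fun₀ hs fun x hx => abs_of_nonneg hx
  have hneg : ∫ x in {x | 0 ≤ f x}ᶜ, |f x| ∂μ = ∫ x in {x | 0 ≤ f x}ᶜ, -f x ∂μ :=
    setIntegral_congr_fun₀ hs.compl fun x hx => abs_of_neg (not_le.mp hx)
  rw [← integral_add_compl₀ hs hf.abs, hpos, hneg, integral_neg,
    setIntegral_compl_eq_neg_of_integral_eq_zero hf h0 hs]
  ring

end MeanZero

section InnerProductSpace

variable {E : Type*} [NormedAddCommGroup E] [InnerProductSpace ℝ E]

theorem exists_norm_eq_one_inner_eq_norm [Nontrivial E] (m : E) :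
    ∃ v : E, ‖v‖ = 1 ∧ ⟪m, v⟫ = ‖m‖ := by
  by_cases hm : m = 0
  · obtain ⟨v, hv⟩ := exists_norm_eq E zero_le_one
    exact ⟨v, hv, by simp [hm]⟩
  · refine ⟨‖m‖⁻¹ • m, by simp [norm_smul, hm], ?_⟩
    rw [real_inner_smul_right, real_inner_self_eq_norm_sq]
    field_simp

section Integral

variable {α : Type*} [MeasurableSpace α] {μ : Measure α} {f : α → E}

theorem norm_setIntegral_le_integral_norm (hf : Integrable f μ) (s : Set α) :
    ‖∫ x in s, f x ∂μ‖ ≤ ∫ x, ‖f x‖ ∂μ :=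
  (norm_integral_le_integral_norm _).trans
    (setIntegral_le_integral hf.norm (ae_of_all _ fun x => norm_nonneg (f x)))

theorem integral_inner_const [CompleteSpace E] (hf : Integrable f μ) (c : E) :
    ∫ x, ⟪f x, c⟫ ∂μ = ⟪∫ x, f x ∂μ, c⟫ := by
  simp_rw [real_inner_comm c]
  exact integral_inner hf c

end Integral

variable [MeasurableSpace E] {μ : Measure E}

theorem integral_abs_inner_le_integral_norm (hid : Integrable (fun r : E => r) μ) {v : E}
    (hv : ‖v‖ = 1) : ∫ r, |⟪r, v⟫| ∂μ ≤ ∫ r, ‖r‖ ∂μ :=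
  integral_mono (hid.inner_const v).abs hid.norm fun r => by
    simpa [hv] using abs_real_inner_le_norm r v

theorem iSup_norm_setIntegral_halfSpace_le_iSup_norm_setIntegral [OpensMeasurableSpace E]
    (hid : Integrable (fun r : E => r) μ) :
    ⨆ v : sphere (0 : E) 1, ‖∫ r in {r | 0 ≤ ⟪r, (v : E)⟫}, r ∂μ‖ ≤
      ⨆ R : Set E, ⨆ _ : MeasurableSet R, ‖∫ r in R, r ∂μ‖ := by
  have hB : BddAbove (range fun R : Set E => ⨆ _ : MeasurableSet R, ‖∫ r in R, r ∂μ‖) :=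
    ⟨_, forall_mem_range.2 fun R =>
      Real.iSup_le (fun _ => norm_setIntegral_le_integral_norm hid R)
        (integral_nonneg fun r => norm_nonneg r)⟩
  refine Real.iSup_le (fun v => le_ciSup_of_le hB {r | 0 ≤ ⟪r, (v : E)⟫} ?_)
    (Real.iSup_nonneg fun R => Real.iSup_nonneg fun _ => norm_nonneg _)
  have : Nonempty (MeasurableSet {r : E | 0 ≤ ⟪r, (v : E)⟫}) :=
    ⟨(isClosed_le continuous_const (continuous_id.inner continuous_const)).measurableSet⟩
  exact ciSup_const.ge

variable [CompleteSpace E]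

theorem integral_abs_inner_eq_two_mul_inner_setIntegral (hid : Integrable (fun r : E => r) μ)
    (hbary : ∫ r, r ∂μ = 0) (v : E) :
    ∫ r, |⟪r, v⟫| ∂μ = 2 * ⟪∫ r in {r | 0 ≤ ⟪r, v⟫}, r ∂μ, v⟫ := by
  rw [integral_abs_eq_two_mul_setIntegral_nonneg (hid.inner_const v)
      (by rw [integral_inner_const hid, hbary, inner_zero_left]),
    integral_inner_const hid.integrableOn]

theorem exists_two_mul_norm_setIntegral_le_integral_abs_inner [Nontrivial E]
    (hid : Integrable (fun r : E => r) μ) (hbary : ∫ r, r ∂μ = 0) {R : Set E}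
    (hR : MeasurableSet R) : ∃ v : E, ‖v‖ = 1 ∧ 2 * ‖∫ r in R, r ∂μ‖ ≤ ∫ r, |⟪r, v⟫| ∂μ := by
  obtain ⟨v, hv, hmv⟩ := exists_norm_eq_one_inner_eq_norm (∫ r in R, r ∂μ)
  refine ⟨v, hv, ?_⟩
  rw [← hmv, ← integral_inner_const hid.integrableOn]
  exact two_mul_setIntegral_le_integral_abs (hid.inner_const v)
    (by rw [integral_inner_const hid, hbary, inner_zero_left]) hR.nullMeasurableSet

theorem iSup_integral_abs_inner_le_two_mul_iSup_norm_setIntegral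
    (hid : Integrable (fun r : E => r) μ) (hbary : ∫ r, r ∂μ = 0) :
    ⨆ v : sphere (0 : E) 1, ∫ r, |⟪r, (v : E)⟫| ∂μ ≤
      2 * ⨆ v : sphere (0 : E) 1, ‖∫ r in {r | 0 ≤ ⟪r, (v : E)⟫}, r ∂μ‖ := by
  have hC : BddAbove
      (range fun v : sphere (0 : E) 1 => ‖∫ r in {r | 0 ≤ ⟪r, (v : E)⟫}, r ∂μ‖) :=
    ⟨_, forall_mem_range.2 fun v => norm_setIntegral_le_integral_norm hid _⟩
  refine Real.iSup_le (fun v => ?_)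
    (mul_nonneg zero_le_two (Real.iSup_nonneg fun _ => norm_nonneg _))
  calc ∫ r, |⟪r, (v : E)⟫| ∂μ = 2 * ⟪∫ r in {r | 0 ≤ ⟪r, (v : E)⟫}, r ∂μ, v⟫ :=
        integral_abs_inner_eq_two_mul_inner_setIntegral hid hbary v
    _ ≤ 2 * ‖∫ r in {r | 0 ≤ ⟪r, (v : E)⟫}, r ∂μ‖ := by
        gcongr
        simpa using real_inner_le_norm (∫ r in {r | 0 ≤ ⟪r, (v : E)⟫}, r ∂μ) v
    _ ≤ 2 * ⨆ v : sphere (0 : E) 1, ‖∫ r in {r | 0 ≤ ⟪r, (v : E)⟫}, r ∂μ‖ := by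
        gcongr
        exact le_ciSup hC v

theorem two_mul_iSup_norm_setIntegral_le_iSup_integral_abs_inner [Nontrivial E]
    (hid : Integrable (fun r : E => r) μ) (hbary : ∫ r, r ∂μ = 0) :
    2 * (⨆ R : Set E, ⨆ _ : MeasurableSet R, ‖∫ r in R, r ∂μ‖) ≤
      ⨆ v : sphere (0 : E) 1, ∫ r, |⟪r, (v : E)⟫| ∂μ := by
  have hA : BddAbove (range fun v : sphere (0 : E) 1 => ∫ r, |⟪r, (v : E)⟫| ∂μ) :=
    ⟨_, forall_mem_range.2 fun v =>
      integral_abs_inner_le_integral_norm hid (norm_eq_of_mem_sphere v)⟩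
  have hA0 : 0 ≤ ⨆ v : sphere (0 : E) 1, ∫ r, |⟪r, (v : E)⟫| ∂μ :=
    Real.iSup_nonneg fun v => integral_nonneg fun r => abs_nonneg _
  rw [← le_div_iff₀' two_pos]
  refine Real.iSup_le (fun R => Real.iSup_le (fun hR => ?_) (by positivity)) (by positivity)
  obtain ⟨v, hv, hle⟩ := exists_two_mul_norm_setIntegral_le_integral_abs_inner hid hbary hR
  rw [le_div_iff₀' two_pos]
  exact le_ciSup_of_le hA ⟨v, mem_sphere_zero_iff_norm.mpr hv⟩ hle

end InnerProductSpace

theorem gstar_eq_two_sup (μ : Measure E3) [IsProbabilityMeasure μ] (hμ : μ unitSphereᶜ = 0)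
    (hbary : (∫ r, r ∂μ) = 0) :
    gstar μ = 2 * ⨆ R : Set E3, ⨆ _ : MeasurableSet R, ‖∫ r in R, r ∂μ‖ ∧
    gstar μ = 2 * ⨆ v : unitSphere, ‖∫ r in {r : E3 | 0 ≤ (inner ℝ r (v : E3) : ℝ)}, r ∂μ‖ := by
  have hsphere : ∀ᵐ r ∂μ, r ∈ unitSphere := mem_ae_iff.mpr hμ
  have hid : Integrable (fun r : E3 => r) μ := .of_bound aestronglyMeasurable_id 1
    (hsphere.mono fun r hr => (mem_sphere_zero_iff_norm.mp hr).le)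
  have hAC := iSup_integral_abs_inner_le_two_mul_iSup_norm_setIntegral hid hbary
  have hCB := iSup_norm_setIntegral_halfSpace_le_iSup_norm_setIntegral hid
  have hBA := two_mul_iSup_norm_setIntegral_le_iSup_integral_abs_inner hid hbary
  unfold gstar unitSphere
  exact ⟨by linarith, by linarith⟩
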